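/- arXiv:1611.01921 — 3 statements merged into one kernel-verified Lean document; each statement's English description precedes it below -/
import Mathlib

section
/- Let p be a prime, α ≥ 1, and (n_d,...,n_1) positive integers of total weight N. Then har_{p^α}(n_d,...,n_1) − har_p(n_d,...,n_1) ∈ p^{N+1} Z_p. In particular, p^{−N} har_{p^α}(n_d,...,n_1) mod p is independent of α. -/
/-!
Write `c = p^(α-1)`, so that `p^α = c·p`. The tuples in the sum defining `mhs (p^α)` whose entries
are all multiples of `c` are exactly `c` times the tuples of `mhs p`, and after the weighting by
`(p^α)^N` they contribute exactly `har p`. Every remaining tuple has entries of valuation at most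
`α-1`, one of them of valuation at most `α-2`, so its weighted term has valuation at least
`N + 1`; the ultrametric inequality finishes the proof.
-/

open Finset

/-- The multiple harmonic sum `∑_{0 < m_1 < ... < m_d < m} 1/(m_1^{n_1} ⋯ m_d^{n_d})`. -/
noncomputable def mhs (m : ℕ) {d : ℕ} (n : Fin d → ℕ) : ℚ :=
  ∑ f ∈ Finset.univ.filter
      (fun f : Fin d → Fin m => (StrictMono fun i => (f i : ℕ)) ∧ ∀ i, 0 < (f i : ℕ)),
    ∏ i, (1 : ℚ) / ((f i : ℕ) : ℚ) ^ (n i)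

/-- The weighted multiple harmonic sum `har_m(n_d,...,n_1) = m^{n_1+⋯+n_d} · mhs`. -/
noncomputable def har (m : ℕ) {d : ℕ} (n : Fin d → ℕ) : ℚ :=
  (m : ℚ) ^ (∑ i, n i) * mhs m n

def mhsIndex (m d : ℕ) : Finset (Fin d → Fin m) :=
  univ.filter fun f => (StrictMono fun i => (f i : ℕ)) ∧ ∀ i, 0 < (f i : ℕ)

noncomputable def mhsTerm {d : ℕ} (n : Fin d → ℕ) (x : Fin d → ℕ) : ℚ :=
  ∏ i, (1 : ℚ) / (x i : ℚ) ^ n i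

lemma mhs_eq_sum_mhsTerm (m : ℕ) {d : ℕ} (n : Fin d → ℕ) :
    mhs m n = ∑ f ∈ mhsIndex m d, mhsTerm n fun i => f i :=
  rfl

lemma mhsTerm_eq_inv {d : ℕ} (n x : Fin d → ℕ) :
    mhsTerm n x = ((∏ i, x i ^ n i : ℕ) : ℚ)⁻¹ := by
  simp [mhsTerm, prod_inv_distrib]

lemma mhsTerm_const_mul {d : ℕ} (n x : Fin d → ℕ) (c : ℕ) :
    mhsTerm n (fun i => c * x i) = ((c : ℚ) ^ ∑ i, n i)⁻¹ * mhsTerm n x := by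
  simp [mhsTerm, mul_pow, prod_mul_distrib, prod_pow_eq_pow_sum, mul_comm]

/-- Scaling by `c` identifies the index set of `mhs m` with the tuples of `mhsIndex (c * m)`
whose entries are all multiples of `c`. -/
lemma sum_mhsIndex_filter_dvd {c : ℕ} (hc : 0 < c) (m : ℕ) {d : ℕ} (n : Fin d → ℕ) :
    ∑ f ∈ (mhsIndex (c * m) d).filter (fun f => ∀ i, c ∣ (f i : ℕ)), mhsTerm n (fun i => f i)
      = ((c : ℚ) ^ ∑ i, n i)⁻¹ * mhs m n := by
  rw [mhs_eq_sum_mhsTerm, mul_sum]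
  symm
  refine sum_nbij' (fun g k => ⟨c * g k, (Nat.mul_lt_mul_left hc).2 (g k).2⟩)
    (fun f k => ⟨f k / c, Nat.div_lt_of_lt_mul (f k).2⟩) ?_ ?_ ?_ ?_ ?_
  · intro g hg
    simp only [mhsIndex, mem_filter, mem_univ, true_and] at hg ⊢
    exact ⟨⟨fun i j hij => (Nat.mul_lt_mul_left hc).2 (hg.1 hij),
      fun i => Nat.mul_pos hc (hg.2 i)⟩, fun i => dvd_mul_right _ _⟩
  · intro f hf
    simp only [mhsIndex, mem_filter, mem_univ, true_and] at hf ⊢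
    obtain ⟨⟨hmono, hpos⟩, hdvd⟩ := hf
    exact ⟨fun i j hij => Nat.div_lt_div_of_lt_of_dvd (hdvd j) (hmono hij),
      fun i => Nat.div_pos (Nat.le_of_dvd (hpos i) (hdvd i)) hc⟩
  · intro g _
    funext k
    exact Fin.ext (Nat.mul_div_cancel_left _ hc)
  · intro f hf
    simp only [mem_filter] at hf
    funext k
    exact Fin.ext (Nat.mul_div_cancel' (hf.2 k))
  · intro g _
    exact (mhsTerm_const_mul n (fun i => g i) c).symm

lemma har_mul_sub_har {c : ℕ} (hc : 0 < c) (m : ℕ) {d : ℕ} (n : Fin d → ℕ) :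
    har (c * m) n - har m n = ((c * m : ℕ) : ℚ) ^ (∑ i, n i) *
      ∑ f ∈ (mhsIndex (c * m) d).filter (fun f => ¬ ∀ i, c ∣ (f i : ℕ)),
        mhsTerm n (fun i => f i) := by
  rw [har, har, mhs_eq_sum_mhsTerm (c * m), ← sum_filter_add_sum_filter_not _
    fun f : Fin d → Fin (c * m) => ∀ i, c ∣ (f i : ℕ), sum_mhsIndex_filter_dvd hc]
  have : (c : ℚ) ≠ 0 := by exact_mod_cast hc.ne'
  push_cast
  field_simp
  ring

-- `∑ nᵢ (a - vᵢ) ≥ ∑ nᵢ + n_j`, with the truncated subtraction moved across.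
lemma sum_mul_add_le_mul_sum {ι : Type*} [Fintype ι] [DecidableEq ι] (n v : ι → ℕ) {a : ℕ}
    (hv : ∀ i, v i < a) {j : ι} (hvj : v j + 1 < a) :
    ∑ i, n i * v i + n j + ∑ i, n i ≤ a * ∑ i, n i := by
  calc ∑ i, n i * v i + n j + ∑ i, n i
      = ∑ i, n i * (v i + (if i = j then 1 else 0) + 1) := by
        simp [mul_add, sum_add_distrib, mul_ite]
    _ ≤ ∑ i, n i * a := by
        gcongr with i
        split_ifs with h
        · exact h ▸ hvj
        · exact hv i
    _ = a * ∑ i, n i := by rw [← sum_mul, mul_comm]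

section Valuation

variable {p : ℕ} [hp : Fact p.Prime]

lemma padicValNat_prod_pow {ι : Type*} (s : Finset ι) (x n : ι → ℕ) (hx : ∀ i ∈ s, x i ≠ 0) :
    padicValNat p (∏ i ∈ s, x i ^ n i) = ∑ i ∈ s, n i * padicValNat p (x i) := by
  simp only [← Nat.factorization_def _ hp.out]
  rw [Nat.factorization_prod fun i hi => pow_ne_zero _ (hx i hi), Finsupp.finsetSum_apply]
  simp [Nat.factorization_pow]

lemma padicValNat_lt_of_lt_pow {x α : ℕ} (hx : x ≠ 0) (hlt : x < p ^ α) :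
    padicValNat p x < α := by
  by_contra! h
  exact hlt.not_ge (Nat.le_of_dvd (Nat.pos_of_ne_zero hx) ((padicValNat_dvd_iff_le hx).2 h))

lemma padicValRat_pow_mul_mhsTerm (α : ℕ) {d : ℕ} (n x : Fin d → ℕ) (hx : ∀ i, x i ≠ 0) :
    padicValRat p (((p ^ α : ℕ) : ℚ) ^ (∑ i, n i) * mhsTerm n x)
      = α * ∑ i, (n i : ℤ) - ∑ i, (n i * padicValNat p (x i) : ℤ) := by
  have hprod : ∏ i, x i ^ n i ≠ 0 := prod_ne_zero_iff.2 fun i _ => pow_ne_zero _ (hx i)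
  rw [mhsTerm_eq_inv, ← div_eq_mul_inv, padicValRat.div (by simp [hp.out.ne_zero])
    (by exact_mod_cast hprod), ← Nat.cast_pow, ← pow_mul, padicValRat.of_nat,
    padicValNat.prime_pow, padicValRat.of_nat, padicValNat_prod_pow _ _ _ fun i _ => hx i]
  push_cast
  rw [mul_sum]

lemma padicNorm_pow_mul_mhsTerm_le {α d : ℕ} (n x : Fin d → ℕ)
    (hx : ∀ i, x i ≠ 0) (hlt : ∀ i, x i < p ^ α) {j : Fin d} (hj : ¬ p ^ (α - 1) ∣ x j)
    (hnj : 0 < n j) :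
    padicNorm p (((p ^ α : ℕ) : ℚ) ^ (∑ i, n i) * mhsTerm n x)
      ≤ (p : ℚ) ^ (-((∑ i, n i : ℤ) + 1)) := by
  have hv (i : Fin d) : padicValNat p (x i) < α := padicValNat_lt_of_lt_pow (hx i) (hlt i)
  have hvj : padicValNat p (x j) + 1 < α := by
    have := (padicValNat_dvd_iff_le (hx j)).not.1 hj
    have := hv j
    omega
  have hne : ((p ^ α : ℕ) : ℚ) ^ (∑ i, n i) * mhsTerm n x ≠ 0 := by
    rw [mhsTerm_eq_inv]
    have : ∏ i, x i ^ n i ≠ 0 := prod_ne_zero_iff.2 fun i _ => pow_ne_zero _ (hx i)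
    exact mul_ne_zero (by simp [hp.out.ne_zero]) (inv_ne_zero (by exact_mod_cast this))
  have hsum := sum_mul_add_le_mul_sum n (fun i => padicValNat p (x i)) hv hvj
  rw [padicNorm.eq_zpow_of_nonzero hne, padicValRat_pow_mul_mhsTerm α n x hx]
  refine zpow_le_zpow_right₀ (by exact_mod_cast hp.out.one_le) ?_
  zify at hsum hnj
  push_cast at hsum ⊢
  linarith

end Valuation

/-- For a prime `p`, `α ≥ 1` and a tuple of positive integers of total weight `N`, we have
`har_{p^α}(n_d,...,n_1) − har_p(n_d,...,n_1) ∈ p^{N+1} ℤ_p`; in particular the reduction of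
`p^{-N} har_{p^α}(w)` modulo `p` is independent of `α`. -/
theorem har_prime_power_sub_har_prime (p : ℕ) [Fact p.Prime] (α : ℕ) (hα : 1 ≤ α)
    {d : ℕ} (n : Fin d → ℕ) (hn : ∀ i, 0 < n i) :
    ‖((har (p ^ α) n : ℚ) : ℚ_[p]) - ((har p n : ℚ) : ℚ_[p])‖
      ≤ (p : ℝ) ^ (-((∑ i, n i : ℤ) + 1)) := by
  have hpα : p ^ α = p ^ (α - 1) * p := by rw [← pow_succ, Nat.sub_add_cancel hα]
  have hdiff := har_mul_sub_har (pow_pos (Fact.out : p.Prime).pos (α - 1)) p n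
  rw [← hpα] at hdiff
  have hbound : padicNorm p (har (p ^ α) n - har p n) ≤ (p : ℚ) ^ (-((∑ i, n i : ℤ) + 1)) := by
    rw [hdiff, mul_sum]
    refine padicNorm.sum_le' (fun f hf => ?_) (by positivity)
    simp only [mhsIndex, mem_filter, mem_univ, true_and, not_forall] at hf
    obtain ⟨⟨-, hpos⟩, j, hj⟩ := hf
    exact padicNorm_pow_mul_mhsTerm_le n _ (fun i => (hpos i).ne') (fun i => (f i).2) hj (hn j)
  rw [← Rat.cast_sub, Padic.eq_padicNorm]
  simpa using (Rat.cast_le (K := ℝ)).2 hbound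
end

section
/- Euler's identity ζ(2,1) = ζ(3) holds: Σ_{0<m_1<m_2} 1/(m_1 m_2^2) = Σ_{0<m} 1/m^3. -/
/-- The Riemann zeta value `ζ(n) = ∑_{m ≥ 1} 1/m^n` as a real series. -/
noncomputable def zetaVal (n : ℕ) : ℝ := ∑' m : ℕ+, (1 : ℝ) / (m : ℝ) ^ n

/-- The double zeta value `ζ(n₂,n₁) = ∑_{0<m_1<m_2} 1/(m_1^{n_1} m_2^{n_2})`. -/
noncomputable def zetaVal2 (n₂ n₁ : ℕ) : ℝ :=
  ∑' q : {q : ℕ+ × ℕ+ // q.1 < q.2}, (1 : ℝ) / ((q.1.1 : ℝ) ^ n₁ * (q.1.2 : ℝ) ^ n₂)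

/-!
Euler's argument: evaluate `S = ∑_{j,k ≥ 1} 1/(jk(j+k))` in two ways.
The partial fractions `1/(jk(j+k)) = 1/(j(j+k)²) + 1/(k(j+k)²)` and the substitution `n = j + k`
give `S = 2 ζ(2,1)`. Summing over `k` first telescopes, `∑_k 1/(k(j+k)) = H_j / j`, so
`S = ∑_j H_j / j² = ∑_{m ≤ n} 1/(m n²) = ζ(2,1) + ζ(3)`. As `ζ(2,1)` is finite, it equals `ζ(3)`.
All sums are taken in `ℝ≥0∞`, where they can be rearranged without summability side conditions.
-/

open Filter Topology Finset ENNReal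

namespace EulerZeta

theorem hasSum_sub_succ_of_antitone {f : ℕ → ℝ} (hf : Antitone f)
    (hf0 : Tendsto f atTop (𝓝 0)) : HasSum (fun n ↦ f n - f (n + 1)) (f 0) := by
  rw [hasSum_iff_tendsto_nat_of_nonneg (fun n ↦ sub_nonneg.2 (hf n.le_succ))]
  simp_rw [sum_range_sub']
  simpa using tendsto_const_nhds.sub hf0

theorem hasSum_sub_add_of_antitone {f : ℕ → ℝ} (hf : Antitone f)
    (hf0 : Tendsto f atTop (𝓝 0)) (j : ℕ) :
    HasSum (fun n ↦ f n - f (n + j)) (∑ i ∈ range j, f i) := by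
  induction j with
  | zero => simp
  | succ j ih =>
    have hshift := hasSum_sub_succ_of_antitone
      (hf.comp_monotone fun _ _ h ↦ Nat.add_le_add_right h j) (hf0.comp (tendsto_add_atTop_nat j))
    rw [sum_range_succ]
    convert ih.add hshift using 1
    · funext n
      simp only [Function.comp_apply, add_right_comm n 1 j, ← add_assoc]
      ring
    · simp

theorem sum_Iic_pnat_eq_sum_range {M : Type*} [AddCommMonoid M] (f : ℕ → M) (j : ℕ+) :
    ∑ m ∈ Iic j, f m = ∑ i ∈ range j, f (i + 1) := by
  refine sum_nbij' PNat.natPred Nat.succPNat (fun m hm ↦ ?_) (fun i hi ↦ ?_)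
    (by simp) (by simp) (by simp)
  · simp only [mem_Iic, mem_range] at hm ⊢
    rw [← PNat.coe_le_coe, ← PNat.natPred_add_one m] at hm
    omega
  · simp only [mem_range, mem_Iic] at hi ⊢
    rw [← PNat.coe_le_coe, Nat.succPNat_coe]
    omega

theorem hasSum_one_div_mul_mul_add (j : ℕ+) :
    HasSum (fun k : ℕ+ ↦ 1 / ((j : ℝ) * k * (j + k))) (∑ m ∈ Iic j, 1 / ((m : ℝ) * j ^ 2)) := by
  have htele := hasSum_sub_add_of_antitone (f := fun n : ℕ ↦ 1 / ((n : ℝ) + 1))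
    (fun a b hab ↦ by dsimp only; gcongr) tendsto_one_div_add_atTop_nhds_zero_nat j
  rw [sum_Iic_pnat_eq_sum_range (fun m ↦ 1 / ((m : ℝ) * j ^ 2)), hasSum_pnat_iff_hasSum_succ
    (f := fun k ↦ 1 / ((j : ℝ) * k * (j + k)))]
  have hvalue : ∑ i ∈ range j, 1 / (((i + 1 : ℕ) : ℝ) * j ^ 2)
      = (∑ i ∈ range j, 1 / ((i : ℝ) + 1)) / j ^ 2 := by
    rw [sum_div]
    push_cast
    exact sum_congr rfl fun i _ ↦ (div_div _ _ _).symm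
  rw [hvalue]
  refine (htele.div_const _).congr_fun fun n ↦ ?_
  push_cast
  field_simp
  ring

theorem tsum_ofReal_one_div_mul_mul_add (j : ℕ+) :
    ∑' k : ℕ+, ENNReal.ofReal (1 / ((j : ℝ) * k * (j + k)))
      = ∑ m ∈ Iic j, ENNReal.ofReal (1 / ((m : ℝ) * j ^ 2)) := by
  rw [← ENNReal.ofReal_tsum_of_nonneg (fun k ↦ by positivity)
      (hasSum_one_div_mul_mul_add j).summable, (hasSum_one_div_mul_mul_add j).tsum_eq,
    ENNReal.ofReal_sum_of_nonneg (fun m _ ↦ by positivity)]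

theorem tsum_sum_Iic_eq_tsum_lt_add {α : Type*} [PartialOrder α] [LocallyFiniteOrderBot α]
    (F : α → α → ℝ≥0∞) :
    ∑' n, ∑ m ∈ Iic n, F m n = ∑' q : {q : α × α // q.1 < q.2}, F q.1.1 q.1.2 + ∑' n, F n n := by
  simp_rw [Iic_eq_cons_Iio, sum_cons]
  rw [ENNReal.tsum_add, add_comm]
  congr 1
  refine Eq.trans ?_ (tsum_subtype {q : α × α | q.1 < q.2} fun q ↦ F q.1 q.2).symm
  rw [ENNReal.tsum_prod', ENNReal.tsum_comm]
  refine tsum_congr fun n ↦ ?_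
  rw [sum_eq_tsum_indicator]
  refine tsum_congr fun m ↦ ?_
  rw [coe_Iio]
  rfl

def pnatLtEquiv : ℕ+ × ℕ+ ≃ {q : ℕ+ × ℕ+ // q.1 < q.2} where
  toFun p := ⟨(p.1, p.1 + p.2), PNat.lt_add_right _ _⟩
  invFun q := (q.1.1, q.1.2 - q.1.1)
  left_inv p := by simp [add_comm p.1]
  right_inv q := Subtype.ext <| Prod.ext rfl (PNat.add_sub_of_lt q.2)

theorem tsum_pnat_lt_eq_tsum_add {M : Type*} [AddCommMonoid M] [TopologicalSpace M]
    (F : ℕ+ → ℕ+ → M) :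
    ∑' q : {q : ℕ+ × ℕ+ // q.1 < q.2}, F q.1.1 q.1.2 = ∑' p : ℕ+ × ℕ+, F p.1 (p.1 + p.2) :=
  (pnatLtEquiv.tsum_eq fun q ↦ F q.1.1 q.1.2).symm

theorem tsum_prod_one_div_mul_mul_add_eq_add_self :
    ∑' p : ℕ+ × ℕ+, ENNReal.ofReal (1 / ((p.1 : ℝ) * p.2 * (p.1 + p.2)))
      = (∑' q : {q : ℕ+ × ℕ+ // q.1 < q.2}, ENNReal.ofReal (1 / ((q.1.1 : ℝ) * q.1.2 ^ 2)))
        + ∑' q : {q : ℕ+ × ℕ+ // q.1 < q.2}, ENNReal.ofReal (1 / ((q.1.1 : ℝ) * q.1.2 ^ 2)) := by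
  have hsplit : ∀ j k : ℕ+, ENNReal.ofReal (1 / ((j : ℝ) * k * (j + k)))
      = ENNReal.ofReal (1 / ((j : ℝ) * (j + k) ^ 2))
        + ENNReal.ofReal (1 / ((k : ℝ) * (k + j) ^ 2)) := by
    intro j k
    rw [← ENNReal.ofReal_add (by positivity) (by positivity)]
    congr 1
    field_simp
    ring
  simp_rw [hsplit, tsum_pnat_lt_eq_tsum_add (fun m n ↦ ENNReal.ofReal (1 / ((m : ℝ) * n ^ 2)))]
  rw [ENNReal.tsum_add]
  push_cast
  congr 1
  exact (Equiv.prodComm ℕ+ ℕ+).tsum_eq fun p ↦ ENNReal.ofReal (1 / ((p.1 : ℝ) * (p.1 + p.2) ^ 2))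

theorem tsum_prod_one_div_mul_mul_add_eq_add_tsum_cube :
    ∑' p : ℕ+ × ℕ+, ENNReal.ofReal (1 / ((p.1 : ℝ) * p.2 * (p.1 + p.2)))
      = (∑' q : {q : ℕ+ × ℕ+ // q.1 < q.2}, ENNReal.ofReal (1 / ((q.1.1 : ℝ) * q.1.2 ^ 2)))
        + ∑' n : ℕ+, ENNReal.ofReal (1 / (n : ℝ) ^ 3) := by
  rw [ENNReal.tsum_prod']
  simp_rw [tsum_ofReal_one_div_mul_mul_add]
  rw [tsum_sum_Iic_eq_tsum_lt_add fun m n : ℕ+ ↦ ENNReal.ofReal (1 / ((m : ℝ) * n ^ 2))]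
  simp_rw [← pow_succ']

theorem one_div_mul_sq_le_of_le {x y : ℝ} (hx : 0 < x) (hxy : x ≤ y) :
    1 / (x * y ^ 2) ≤ 1 / x ^ (3 / 2 : ℝ) * (1 / y ^ (3 / 2 : ℝ)) := by
  have hy : 0 < y := hx.trans_le hxy
  have hsq : ∀ z : ℝ, 0 ≤ z → (z ^ (3 / 2 : ℝ)) ^ 2 = z ^ 3 := fun z hz ↦ by
    rw [← Real.rpow_natCast, ← Real.rpow_mul hz]
    norm_num
  rw [div_mul_div_comm, one_mul]
  refine one_div_le_one_div_of_le (by positivity) ?_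
  rw [← pow_le_pow_iff_left₀ (by positivity) (by positivity) two_ne_zero, mul_pow, mul_pow,
    hsq x hx.le, hsq y hy.le]
  calc x ^ 3 * y ^ 3 = x ^ 2 * y ^ 3 * x := by ring
    _ ≤ x ^ 2 * y ^ 3 * y := by gcongr
    _ = x ^ 2 * (y ^ 2) ^ 2 := by ring

theorem summable_one_div_mul_sq_of_lt :
    Summable fun q : {q : ℕ+ × ℕ+ // q.1 < q.2} ↦ 1 / ((q.1.1 : ℝ) * q.1.2 ^ 2) := by
  have ha : Summable fun m : ℕ+ ↦ 1 / (m : ℝ) ^ (3 / 2 : ℝ) :=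
    (Real.summable_one_div_nat_rpow.2 (by norm_num)).comp_injective PNat.coe_injective
  refine .of_nonneg_of_le (fun q ↦ by positivity) (fun q ↦ ?_)
    ((ha.mul_of_nonneg ha (fun _ ↦ by positivity) (fun _ ↦ by positivity)).comp_injective
      Subtype.val_injective)
  exact one_div_mul_sq_le_of_le (by positivity) (by exact_mod_cast q.2.le)

theorem tsum_ofReal_one_div_mul_sq_eq_tsum_cube :
    ∑' q : {q : ℕ+ × ℕ+ // q.1 < q.2}, ENNReal.ofReal (1 / ((q.1.1 : ℝ) * q.1.2 ^ 2))
      = ∑' n : ℕ+, ENNReal.ofReal (1 / (n : ℝ) ^ 3) := by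
  have hfin : ∑' q : {q : ℕ+ × ℕ+ // q.1 < q.2}, ENNReal.ofReal (1 / ((q.1.1 : ℝ) * q.1.2 ^ 2))
      ≠ ∞ := by
    rw [← ENNReal.ofReal_tsum_of_nonneg (fun q ↦ by positivity) summable_one_div_mul_sq_of_lt]
    exact ofReal_ne_top
  exact (ENNReal.add_right_inj hfin).1 <| tsum_prod_one_div_mul_mul_add_eq_add_self.symm.trans
    tsum_prod_one_div_mul_mul_add_eq_add_tsum_cube

theorem tsum_eq_toReal_tsum_ofReal {ι : Type*} {f : ι → ℝ} (hf : ∀ i, 0 ≤ f i) :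
    ∑' i, f i = (∑' i, ENNReal.ofReal (f i)).toReal := by
  rw [ENNReal.tsum_toReal_eq fun _ ↦ ofReal_ne_top]
  simp only [ENNReal.toReal_ofReal (hf _)]

end EulerZeta

/-- Euler's identity `ζ(2,1) = ζ(3)`. -/
theorem euler_zeta_two_one : zetaVal2 2 1 = zetaVal 3 := by
  rw [zetaVal2, zetaVal, EulerZeta.tsum_eq_toReal_tsum_ofReal fun _ ↦ by positivity,
    EulerZeta.tsum_eq_toReal_tsum_ofReal fun _ ↦ by positivity]
  simp_rw [pow_one]
  rw [EulerZeta.tsum_ofReal_one_div_mul_sq_eq_tsum_cube]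
end

section
/- Let K be a field (or commutative ring) and let G be the set of f ∈ K⟨⟨e_0,e_1⟩⟩ with constant coefficient f[∅] = 1. Define the Ihara (twisted Magnus) product g ∘ f = g(e_0,e_1) · f(e_0, g^{-1} e_1 g), where f(e_0, h) denotes the continuous K-algebra substitution e_0 ↦ e_0, e_1 ↦ h applied to f, and g^{-1} is the multiplicative inverse of g. Then (G, ∘) is a group: ∘ is associative, has unit the constant series 1, and every element has a two-sided inverse. -/
open Finset

abbrev Word := List (Fin 2)

variable {K : Type*} [Field K]

/-- Multiplication via deconcatenation: `(f·g)[w] = ∑_{w = uv} f[u]·g[v]`. -/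
def seriesMul (f g : Word → K) : Word → K :=
  fun w => ∑ k ∈ Finset.range (w.length + 1), f (w.take k) * g (w.drop k)

/-- The unit series `1`. -/
def seriesOne : Word → K := fun w => if w = [] then 1 else 0

/-- The series `e₁`. -/
def e1Series : Word → K := fun w => if w = [1] then 1 else 0

/-- The multiplicative inverse of a series with constant coefficient `1`. -/
def seriesInv (f : Word → K) : Word → K
  | [] => 1
  | x :: w => -∑ k ∈ Finset.range (w.length + 1), f (x :: w.take k) * seriesInv f (w.drop k)
  termination_by w => w.length
  decreasing_by simp [List.length_drop] <;> omega

/-- Coefficient of the word `w` in the image of the monomial `u` under the continuous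
algebra substitution `e₀ ↦ e₀`, `e₁ ↦ h`. -/
def substCoeff (h : Word → K) : Word → Word → K
  | [], w => if w = [] then 1 else 0
  | a :: u, w =>
    if a = 0 then
      match w with
      | [] => 0
      | b :: w' => if b = 0 then substCoeff h u w' else 0
    else
      ∑ k ∈ Finset.range (w.length + 1), h (w.take k) * substCoeff h u (w.drop k)

/-- The substitution `f(e₀, h)`: substitute `e₀ ↦ e₀`, `e₁ ↦ h` in `f`
(for `h` with zero constant coefficient). -/
def subst (f h : Word → K) : Word → K :=
  fun w => ∑ k ∈ Finset.range (w.length + 1),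
    ∑ u : Fin k → Fin 2, f (List.ofFn u) * substCoeff h (List.ofFn u) w

/-- `Ad_g(e₁) = g⁻¹ e₁ g`. -/
def adE1 (g : Word → K) : Word → K :=
  seriesMul (seriesMul (seriesInv g) e1Series) g

/-- The Ihara (twisted Magnus) product `g ∘ f = g · f(e₀, g⁻¹ e₁ g)`. -/
def ihara (g f : Word → K) : Word → K :=
  seriesMul g (subst f (adE1 g))

/-!
For `h` without constant term, `f ↦ f(e₀, h)` is a ring endomorphism and substitutions compose:
`f(e₀, k)(e₀, h) = f(e₀, k(e₀, h))`. Since `Ad_{h ∘ g}(e₁) = (Ad_g e₁)(e₀, Ad_h e₁)`, both sides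
of the associativity law become `h · g(e₀, Ad_h e₁) · f(e₀, (Ad_g e₁)(e₀, Ad_h e₁))`.
A left inverse of `f` is a fixed point of `a ↦ f(e₀, Ad_a e₁)⁻¹`. As `Ad_a e₁` has no constant
term, its coefficients of length `≤ m` only depend on those of `a` of length `< m`, so the
iteration stabilises coefficientwise. A monoid in which every element has a left inverse is a
group.
-/

theorem seriesMul_nil (f g : Word → K) : seriesMul f g [] = f [] * g [] := by
  simp [seriesMul]

theorem seriesMul_cons (f g : Word → K) (x : Fin 2) (w : Word) :
    seriesMul f g (x :: w) = f [] * g (x :: w) + seriesMul (fun u => f (x :: u)) g w := by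
  rw [seriesMul, List.length_cons, sum_range_succ', add_comm]
  simp [seriesMul]

theorem seriesOne_mul (f : Word → K) : seriesMul seriesOne f = f := by
  funext w
  rw [seriesMul, sum_eq_single_of_mem 0 (by simp)]
  · simp [seriesOne]
  · intro k hk hk0
    have : w.take k ≠ [] := List.ne_nil_of_length_pos (by simp at hk ⊢; omega)
    simp [seriesOne, this]

theorem seriesMul_one (f : Word → K) : seriesMul f seriesOne = f := by
  funext w
  rw [seriesMul, sum_eq_single_of_mem w.length (by simp)]
  · simp [seriesOne]
  · intro k hk hkw
    have : w.drop k ≠ [] := by simp at hk ⊢; omega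
    simp [seriesOne, this]

theorem seriesMul_smul_add_left (c : K) (a b g : Word → K) (w : Word) :
    seriesMul (fun u => c * a u + b u) g w = c * seriesMul a g w + seriesMul b g w := by
  simp only [seriesMul, mul_sum, ← sum_add_distrib, add_mul, mul_assoc]

theorem seriesMul_assoc (f g h : Word → K) :
    seriesMul (seriesMul f g) h = seriesMul f (seriesMul g h) := by
  funext w
  induction w generalizing f g h with
  | nil => simp [seriesMul_nil, mul_assoc]
  | cons x w ih =>
    have hfg : (fun u => seriesMul f g (x :: u)) =
        fun u => f [] * g (x :: u) + seriesMul (fun v => f (x :: v)) g u :=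
      funext fun u => seriesMul_cons f g x u
    rw [seriesMul_cons, seriesMul_cons, seriesMul_cons, seriesMul_nil, hfg,
      seriesMul_smul_add_left, ih]
    ring

theorem seriesInv_nil (f : Word → K) : seriesInv f [] = 1 := by
  rw [seriesInv]

theorem seriesInv_cons (f : Word → K) (x : Fin 2) (w : Word) :
    seriesInv f (x :: w) =
      -∑ k ∈ range (w.length + 1), f (x :: w.take k) * seriesInv f (w.drop k) := by
  rw [seriesInv]

theorem seriesMul_inv_cancel {f : Word → K} (hf : f [] = 1) :
    seriesMul f (seriesInv f) = seriesOne := by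
  funext w
  cases w with
  | nil => simp [seriesMul_nil, seriesInv_nil, seriesOne, hf]
  | cons x w =>
    rw [seriesMul_cons, hf, one_mul, seriesInv_cons]
    simp [seriesMul, seriesOne]

theorem seriesMul_left_inv_eq_right_inv {a b c : Word → K} (hba : seriesMul b a = seriesOne)
    (hac : seriesMul a c = seriesOne) : b = c := by
  rw [← seriesMul_one b, ← hac, ← seriesMul_assoc, hba, seriesOne_mul]

theorem seriesInv_mul_cancel {f : Word → K} (hf : f [] = 1) :
    seriesMul (seriesInv f) f = seriesOne := by
  have hinv := seriesMul_inv_cancel (seriesInv_nil f)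
  rwa [← seriesMul_left_inv_eq_right_inv (seriesMul_inv_cancel hf) hinv] at hinv

theorem eq_seriesInv_of_seriesMul_eq_one {a b : Word → K} (ha : a [] = 1)
    (hab : seriesMul a b = seriesOne) : b = seriesInv a :=
  (seriesMul_left_inv_eq_right_inv (seriesInv_mul_cancel ha) hab).symm

theorem seriesInv_one : seriesInv (seriesOne : Word → K) = seriesOne :=
  (eq_seriesInv_of_seriesMul_eq_one (by simp [seriesOne]) (seriesOne_mul _)).symm

theorem seriesInv_mul_rev {a b : Word → K} (ha : a [] = 1) (hb : b [] = 1) :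
    seriesInv (seriesMul a b) = seriesMul (seriesInv b) (seriesInv a) := by
  refine (eq_seriesInv_of_seriesMul_eq_one (by simp [seriesMul_nil, ha, hb]) ?_).symm
  rw [seriesMul_assoc, ← seriesMul_assoc b, seriesMul_inv_cancel hb, seriesOne_mul,
    seriesMul_inv_cancel ha]

def monomial (u : Word) : Word → K := fun w => if w = u then 1 else 0

theorem monomial_nil : (monomial [] : Word → K) = seriesOne := rfl

theorem monomial_one : (monomial [1] : Word → K) = e1Series := rfl

theorem monomial_mul_nil (a : Fin 2) (f : Word → K) : seriesMul (monomial [a]) f [] = 0 := by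
  simp [seriesMul, monomial]

theorem monomial_mul_cons (a b : Fin 2) (f : Word → K) (w : Word) :
    seriesMul (monomial [a]) f (b :: w) = if b = a then f w else 0 := by
  rw [seriesMul_cons]
  split_ifs with hb
  · obtain rfl := hb
    have h1 : (fun u => monomial [b] (b :: u)) = (seriesOne : Word → K) := by
      funext u; simp [monomial, seriesOne]
    rw [h1, seriesOne_mul]
    simp [monomial]
  · simp [monomial, hb, seriesMul]

theorem substCoeff_nil (h : Word → K) : substCoeff h [] = seriesOne := rfl

theorem substCoeff_cons (h : Word → K) (a : Fin 2) (u : Word) :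
    substCoeff h (a :: u) =
      seriesMul (if a = 0 then monomial [0] else h) (substCoeff h u) := by
  funext w
  fin_cases a
  · cases w with
    | nil => simp [substCoeff, monomial_mul_nil]
    | cons b w => simp [substCoeff, monomial_mul_cons]
  · simp [substCoeff, seriesMul]

theorem substCoeff_append (h : Word → K) (u v : Word) :
    substCoeff h (u ++ v) = seriesMul (substCoeff h u) (substCoeff h v) := by
  induction u with
  | nil => rw [List.nil_append, substCoeff_nil, seriesOne_mul]
  | cons a u ih => rw [List.cons_append, substCoeff_cons, substCoeff_cons, ih, seriesMul_assoc]

theorem substCoeff_eq_zero_of_length_lt {h : Word → K} (h0 : h [] = 0) {u w : Word}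
    (hw : w.length < u.length) : substCoeff h u w = 0 := by
  induction u generalizing w with
  | nil => simp at hw
  | cons a u ih =>
    have hfirst : (if a = 0 then monomial [0] else h) [] = 0 := by
      split_ifs <;> simp [monomial, h0]
    rw [substCoeff_cons, seriesMul]
    refine sum_eq_zero fun k hk => ?_
    rcases Nat.eq_zero_or_pos k with rfl | hk0
    · simp [hfirst]
    · rw [ih (by simp at hw hk ⊢; omega), mul_zero]

theorem substCoeff_e1Series (u : Word) : substCoeff (e1Series : Word → K) u = monomial u := by
  induction u with
  | nil => rfl
  | cons a u ih =>
    have hletter : (if a = 0 then monomial [0] else e1Series : Word → K) = monomial [a] := by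
      fin_cases a <;> rfl
    rw [substCoeff_cons, hletter, ih]
    funext w
    cases w with
    | nil => simp [monomial_mul_nil, monomial]
    | cons b w => simp [monomial_mul_cons, monomial, ite_and, eq_comm]

def wordsUpTo (n : ℕ) : Finset Word :=
  (range (n + 1)).biUnion fun k =>
    image (fun u : Fin k → Fin 2 => List.ofFn u) univ

theorem mem_wordsUpTo {n : ℕ} {u : Word} : u ∈ wordsUpTo n ↔ u.length ≤ n := by
  simp only [wordsUpTo, mem_biUnion, mem_image, mem_range, mem_univ, true_and]
  constructor
  · rintro ⟨k, hk, v, rfl⟩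
    simp; omega
  · intro hu
    exact ⟨u.length, by omega, u.get, List.ofFn_get u⟩

theorem subst_eq_sum (f h : Word → K) (w : Word) :
    subst f h w = ∑ u ∈ wordsUpTo w.length, f u * substCoeff h u w := by
  rw [subst, wordsUpTo, sum_biUnion]
  · refine sum_congr rfl fun k _ => ?_
    rw [sum_image fun a _ b _ hab => List.ofFn_injective hab]
  · intro k _ l _ hkl
    simp only [Function.onFun, disjoint_left, mem_image, mem_univ, true_and, not_exists,
      forall_exists_index, forall_apply_eq_imp_iff]
    intro u v huv
    exact hkl (by simpa using congrArg List.length huv.symm)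

theorem subst_eq_sum_of_le (f : Word → K) {h : Word → K} (h0 : h [] = 0) {w : Word} {n : ℕ}
    (hn : w.length ≤ n) : subst f h w = ∑ u ∈ wordsUpTo n, f u * substCoeff h u w := by
  rw [subst_eq_sum]
  refine sum_subset (fun u hu => ?_) fun u _ hu => ?_
  · rw [mem_wordsUpTo] at hu ⊢; omega
  · rw [mem_wordsUpTo, not_le] at hu
    rw [substCoeff_eq_zero_of_length_lt h0 (by omega), mul_zero]

theorem subst_nil (f h : Word → K) : subst f h [] = f [] := by
  simp [subst, substCoeff]

theorem subst_monomial {h : Word → K} (h0 : h [] = 0) (u : Word) :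
    subst (monomial u) h = substCoeff h u := by
  funext w
  simp only [subst_eq_sum, monomial, ite_mul, one_mul, zero_mul, sum_ite_eq', mem_wordsUpTo]
  split_ifs with hu
  · rfl
  · rw [substCoeff_eq_zero_of_length_lt h0 (by omega)]

theorem subst_one {h : Word → K} (h0 : h [] = 0) : subst seriesOne h = seriesOne := by
  rw [← monomial_nil, subst_monomial h0, substCoeff_nil, monomial_nil]

theorem sum_wordsUpTo_take_drop {M : Type*} [AddCommMonoid M] (n : ℕ) (F : Word → Word → M)
    (hF : ∀ u₁ u₂ : Word, n < u₁.length + u₂.length → F u₁ u₂ = 0) :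
    ∑ u ∈ wordsUpTo n, ∑ j ∈ range (u.length + 1), F (u.take j) (u.drop j) =
      ∑ u₁ ∈ wordsUpTo n, ∑ u₂ ∈ wordsUpTo n, F u₁ u₂ := by
  have hshort : ∑ p ∈ wordsUpTo n ×ˢ wordsUpTo n, F p.1 p.2 =
      ∑ p ∈ wordsUpTo n ×ˢ wordsUpTo n with p.1.length + p.2.length ≤ n, F p.1 p.2 :=
    (sum_filter_of_ne fun p _ hp => not_lt.1 fun hlt => hp (hF p.1 p.2 hlt)).symm
  rw [sum_sigma', ← sum_product', hshort]
  refine sum_nbij' (fun p => (p.1.take p.2, p.1.drop p.2))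
    (fun p => ⟨p.1 ++ p.2, p.1.length⟩) ?_ ?_ ?_ ?_ ?_
  · rintro ⟨u, j⟩ hu
    simp only [mem_sigma, mem_wordsUpTo, mem_range] at hu
    simp only [mem_filter, mem_product, mem_wordsUpTo, List.length_take, List.length_drop]
    omega
  · rintro ⟨u₁, u₂⟩ hu
    simp only [mem_filter, mem_product, mem_wordsUpTo] at hu
    simp only [mem_sigma, mem_wordsUpTo, mem_range, List.length_append]
    omega
  · rintro ⟨u, j⟩ hu
    simp only [mem_sigma, mem_range] at hu
    simp only [List.take_append_drop, List.length_take, Sigma.mk.injEq, heq_eq_eq, true_and]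
    omega
  · rintro ⟨u₁, u₂⟩ _
    simp
  · rintro ⟨u, j⟩ _
    simp

theorem subst_seriesMul (f g : Word → K) {h : Word → K} (h0 : h [] = 0) :
    subst (seriesMul f g) h = seriesMul (subst f h) (subst g h) := by
  funext w
  have hvanish : ∀ u₁ u₂ : Word, w.length < u₁.length + u₂.length →
      f u₁ * g u₂ * substCoeff h (u₁ ++ u₂) w = 0 := fun u₁ u₂ hlt => by
    rw [substCoeff_eq_zero_of_length_lt h0 (by simpa using hlt), mul_zero]
  calc subst (seriesMul f g) h w
      = ∑ u ∈ wordsUpTo w.length, ∑ j ∈ range (u.length + 1),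
          f (u.take j) * g (u.drop j) * substCoeff h (u.take j ++ u.drop j) w := by
        simp only [subst_eq_sum, seriesMul, sum_mul, List.take_append_drop]
    _ = ∑ u₁ ∈ wordsUpTo w.length, ∑ u₂ ∈ wordsUpTo w.length,
          f u₁ * g u₂ * substCoeff h (u₁ ++ u₂) w :=
        sum_wordsUpTo_take_drop _ _ hvanish
    _ = ∑ u₁ ∈ wordsUpTo w.length, ∑ u₂ ∈ wordsUpTo w.length, ∑ m ∈ range (w.length + 1),
          f u₁ * substCoeff h u₁ (w.take m) * (g u₂ * substCoeff h u₂ (w.drop m)) := by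
        refine sum_congr rfl fun u₁ _ => sum_congr rfl fun u₂ _ => ?_
        rw [substCoeff_append, seriesMul, mul_sum]
        exact sum_congr rfl fun m _ => by ring
    _ = ∑ m ∈ range (w.length + 1),
          (∑ u₁ ∈ wordsUpTo w.length, f u₁ * substCoeff h u₁ (w.take m)) *
          ∑ u₂ ∈ wordsUpTo w.length, g u₂ * substCoeff h u₂ (w.drop m) := by
        simp only [sum_mul_sum]
        exact (sum_congr rfl fun _ _ => sum_comm).trans sum_comm
    _ = seriesMul (subst f h) (subst g h) w := by
        refine sum_congr rfl fun m _ => ?_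
        rw [subst_eq_sum_of_le f h0 (n := w.length) (by simp),
          subst_eq_sum_of_le g h0 (n := w.length) (by simp)]

theorem subst_substCoeff (k : Word → K) {h : Word → K} (h0 : h [] = 0) (u : Word) :
    subst (substCoeff k u) h = substCoeff (subst k h) u := by
  induction u with
  | nil => exact subst_one h0
  | cons a u ih =>
    have hletter : subst (if a = 0 then monomial [0] else k) h =
        if a = 0 then monomial [0] else subst k h := by
      split_ifs
      · rw [subst_monomial h0, substCoeff_cons, if_pos rfl, substCoeff_nil, seriesMul_one]
      · rfl
    rw [substCoeff_cons, substCoeff_cons, subst_seriesMul _ _ h0, ih, hletter]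

theorem subst_subst (f : Word → K) {k h : Word → K} (hk : k [] = 0) (h0 : h [] = 0) :
    subst (subst f k) h = subst f (subst k h) := by
  funext w
  calc subst (subst f k) h w
      = ∑ u ∈ wordsUpTo w.length,
          (∑ v ∈ wordsUpTo w.length, f v * substCoeff k v u) * substCoeff h u w := by
        rw [subst_eq_sum]
        refine sum_congr rfl fun u hu => ?_
        rw [subst_eq_sum_of_le f hk (mem_wordsUpTo.1 hu)]
    _ = ∑ v ∈ wordsUpTo w.length,
          f v * ∑ u ∈ wordsUpTo w.length, substCoeff k v u * substCoeff h u w := by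
        simp only [sum_mul, mul_sum, mul_assoc]
        exact sum_comm
    _ = subst f (subst k h) w := by
        simp only [← subst_eq_sum, subst_substCoeff k h0]

theorem subst_seriesInv {g h : Word → K} (hg : g [] = 1) (h0 : h [] = 0) :
    subst (seriesInv g) h = seriesInv (subst g h) := by
  refine eq_seriesInv_of_seriesMul_eq_one (by rw [subst_nil, hg]) ?_
  rw [← subst_seriesMul _ _ h0, seriesMul_inv_cancel hg, subst_one h0]

theorem subst_e1Series {h : Word → K} (h0 : h [] = 0) : subst e1Series h = h := by
  rw [← monomial_one, subst_monomial h0, substCoeff_cons, if_neg one_ne_zero, substCoeff_nil,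
    seriesMul_one]

theorem subst_self (f : Word → K) : subst f e1Series = f := by
  funext w
  simp [subst_eq_sum, substCoeff_e1Series, monomial, mem_wordsUpTo]

theorem adE1_nil (g : Word → K) : adE1 g [] = 0 := by
  simp [adE1, seriesMul_nil, e1Series]

theorem adE1_one : adE1 (seriesOne : Word → K) = e1Series := by
  rw [adE1, seriesInv_one, seriesOne_mul, seriesMul_one]

theorem adE1_ihara {g h : Word → K} (hg : g [] = 1) (hh : h [] = 1) :
    adE1 (ihara h g) = subst (adE1 g) (adE1 h) := by
  have hσ : subst g (adE1 h) [] = 1 := by rw [subst_nil, hg]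
  rw [ihara, adE1.eq_1 (seriesMul h _), seriesInv_mul_rev hh hσ, adE1.eq_1 g,
    subst_seriesMul _ _ (adE1_nil h), subst_seriesMul _ _ (adE1_nil h),
    subst_seriesInv hg (adE1_nil h), subst_e1Series (adE1_nil h), adE1.eq_1 h]
  simp only [seriesMul_assoc]

theorem ihara_nil (g f : Word → K) : ihara g f [] = g [] * f [] := by
  rw [ihara, seriesMul_nil, subst_nil]

theorem ihara_assoc (f : Word → K) {g h : Word → K} (hg : g [] = 1) (hh : h [] = 1) :
    ihara (ihara h g) f = ihara h (ihara g f) := by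
  rw [ihara.eq_1 (ihara h g), adE1_ihara hg hh, ← subst_subst f (adE1_nil g) (adE1_nil h),
    ihara.eq_1 h g, ihara.eq_1 h, ihara.eq_1 g, subst_seriesMul _ _ (adE1_nil h),
    seriesMul_assoc]

theorem ihara_one_left (f : Word → K) : ihara seriesOne f = f := by
  rw [ihara, seriesOne_mul, adE1_one, subst_self]

theorem ihara_one_right (f : Word → K) : ihara f seriesOne = f := by
  rw [ihara, subst_one (adE1_nil f), seriesMul_one]

section Contraction

variable {α : Type*}

def EqBelow (m : ℕ) (a b : Word → α) : Prop := ∀ v : Word, v.length < m → a v = b v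

def IsContracting (T : (Word → α) → Word → α) : Prop :=
  ∀ m a b, EqBelow m a b → EqBelow (m + 1) (T a) (T b)

-- For contracting `T` the coefficient of `w` has stabilised after `|w| + 1` iterations.
def iterateLimit (T : (Word → α) → Word → α) (x : Word → α) : Word → α :=
  fun w => T^[w.length + 1] x w

theorem IsContracting.eqBelow_iterate {T : (Word → α) → Word → α} (hT : IsContracting T)
    (m : ℕ) (a b : Word → α) : EqBelow m (T^[m] a) (T^[m] b) := by
  induction m with
  | zero => exact fun v hv => absurd hv (Nat.not_lt_zero _)
  | succ m ih =>
    rw [Function.iterate_succ_apply', Function.iterate_succ_apply']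
    exact hT m _ _ ih

theorem IsContracting.eqBelow_iterateLimit {T : (Word → α) → Word → α} (hT : IsContracting T)
    (x : Word → α) (m : ℕ) : EqBelow m (iterateLimit T x) (T^[m] x) := by
  intro v hv
  obtain ⟨k, rfl⟩ : ∃ k, m = v.length + 1 + k := ⟨m - (v.length + 1), by omega⟩
  rw [Function.iterate_add_apply]
  exact hT.eqBelow_iterate _ x _ v (Nat.lt_succ_self _)

theorem IsContracting.apply_iterateLimit {T : (Word → α) → Word → α} (hT : IsContracting T)
    (x : Word → α) : T (iterateLimit T x) = iterateLimit T x := by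
  funext w
  calc T (iterateLimit T x) w = T (T^[w.length] x) w :=
        hT _ _ _ (hT.eqBelow_iterateLimit x w.length) w (Nat.lt_succ_self _)
    _ = iterateLimit T x w := by rw [iterateLimit, Function.iterate_succ_apply']

end Contraction

theorem seriesMul_eqBelow {m : ℕ} {a a' b b' : Word → K} (ha : EqBelow m a a')
    (hb : EqBelow m b b') : EqBelow m (seriesMul a b) (seriesMul a' b') := by
  intro v hv
  refine sum_congr rfl fun k _ => ?_
  rw [ha _ (by simp; omega), hb _ (by simp; omega)]

theorem seriesMul_eqBelow_succ {m : ℕ} {a a' b b' : Word → K} (ha : EqBelow m a a')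
    (hb : EqBelow (m + 1) b b') (hb0 : b [] = 0) (hb0' : b' [] = 0) :
    EqBelow (m + 1) (seriesMul a b) (seriesMul a' b') := by
  intro v hv
  refine sum_congr rfl fun k hk => ?_
  rw [mem_range] at hk
  rcases Nat.lt_or_ge k v.length with hkv | hkv
  · rw [ha _ (by simp; omega), hb _ (by simp; omega)]
  · rw [List.drop_eq_nil_of_le hkv, hb0, hb0', mul_zero, mul_zero]

theorem monomial_mul_eqBelow {m : ℕ} (c : Fin 2) {a b : Word → K} (hab : EqBelow m a b) :
    EqBelow (m + 1) (seriesMul (monomial [c]) a) (seriesMul (monomial [c]) b) := by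
  rintro (_ | ⟨x, v⟩) hv
  · rw [monomial_mul_nil, monomial_mul_nil]
  · rw [monomial_mul_cons, monomial_mul_cons, hab v (by simpa using hv)]

theorem seriesInv_eqBelow {m : ℕ} {a b : Word → K} (hab : EqBelow m a b) :
    EqBelow m (seriesInv a) (seriesInv b) := by
  intro v
  induction v using seriesInv.induct with
  | case1 => simp [seriesInv_nil]
  | case2 x w ih =>
    intro hv
    rw [seriesInv_cons, seriesInv_cons]
    refine congrArg Neg.neg (sum_congr rfl fun k _ => ?_)
    rw [hab _ (by simp at hv ⊢; omega), ih k (by simp at hv ⊢; omega)]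

theorem substCoeff_eqBelow {m : ℕ} {h h' : Word → K} (hh : EqBelow m h h') (u : Word) :
    EqBelow m (substCoeff h u) (substCoeff h' u) := by
  induction u with
  | nil => exact fun _ _ => rfl
  | cons a u ih =>
    rw [substCoeff_cons, substCoeff_cons]
    refine seriesMul_eqBelow ?_ ih
    split_ifs
    · exact fun _ _ => rfl
    · exact hh

theorem subst_eqBelow {m : ℕ} (f : Word → K) {h h' : Word → K} (hh : EqBelow m h h') :
    EqBelow m (subst f h) (subst f h') := fun v hv =>
  sum_congr rfl fun _ _ => sum_congr rfl fun u _ => by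
    rw [substCoeff_eqBelow hh _ v hv]

theorem adE1_eqBelow {m : ℕ} {a b : Word → K} (hab : EqBelow m a b) :
    EqBelow (m + 1) (adE1 a) (adE1 b) := by
  rw [adE1, adE1, seriesMul_assoc, seriesMul_assoc, ← monomial_one]
  exact seriesMul_eqBelow_succ (seriesInv_eqBelow hab) (monomial_mul_eqBelow 1 hab)
    (monomial_mul_nil 1 a) (monomial_mul_nil 1 b)

def iharaInvStep (f a : Word → K) : Word → K := seriesInv (subst f (adE1 a))

theorem isContracting_iharaInvStep (f : Word → K) : IsContracting (iharaInvStep f) :=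
  fun _ _ _ hab => seriesInv_eqBelow (subst_eqBelow f (adE1_eqBelow hab))

def iharaInv (f : Word → K) : Word → K := iterateLimit (iharaInvStep f) seriesOne

theorem iharaInvStep_iharaInv (f : Word → K) : iharaInvStep f (iharaInv f) = iharaInv f :=
  (isContracting_iharaInvStep f).apply_iterateLimit seriesOne

theorem iharaInv_nil (f : Word → K) : iharaInv f [] = 1 := by
  rw [← iharaInvStep_iharaInv, iharaInvStep, seriesInv_nil]

theorem iharaInv_ihara_cancel {f : Word → K} (hf : f [] = 1) : ihara (iharaInv f) f = seriesOne := by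
  nth_rewrite 1 [ihara, ← iharaInvStep_iharaInv]
  exact seriesInv_mul_cancel (by rw [subst_nil, hf])

theorem ihara_iharaInv_cancel {f : Word → K} (hf : f [] = 1) :
    ihara f (iharaInv f) = seriesOne := by
  have hg : iharaInv f [] = 1 := iharaInv_nil f
  calc ihara f (iharaInv f)
      = ihara (ihara (iharaInv (iharaInv f)) (iharaInv f)) (ihara f (iharaInv f)) := by
        rw [iharaInv_ihara_cancel hg, ihara_one_left]
    _ = ihara (iharaInv (iharaInv f)) (ihara (ihara (iharaInv f) f) (iharaInv f)) := by
        rw [ihara_assoc _ hg (iharaInv_nil _), ihara_assoc _ hf hg]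
    _ = seriesOne := by
        rw [iharaInv_ihara_cancel hf, ihara_one_left, iharaInv_ihara_cancel hg]

/-- The set `G` of noncommutative power series `f ∈ K⟨⟨e₀,e₁⟩⟩` with constant coefficient
`f[∅] = 1` is a group under the Ihara (twisted Magnus) product
`g ∘ f = g · f(e₀, g⁻¹ e₁ g)`: the product is closed on `G`, associative,
has the constant series `1` as a two-sided unit, and every element of `G` has a
two-sided inverse in `G`. -/
theorem ihara_group {K : Type*} [Field K] :
    (∀ f g : Word → K, f [] = 1 → g [] = 1 → (ihara g f) [] = 1) ∧
    (∀ f g h : Word → K, f [] = 1 → g [] = 1 → h [] = 1 →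
      ihara (ihara h g) f = ihara h (ihara g f)) ∧
    (∀ f : Word → K, f [] = 1 → ihara seriesOne f = f ∧ ihara f seriesOne = f) ∧
    (∀ f : Word → K, f [] = 1 →
      ∃ f' : Word → K, f' [] = 1 ∧ ihara f' f = seriesOne ∧ ihara f f' = seriesOne) :=
  ⟨fun f g hf hg => by rw [ihara_nil, hf, hg, mul_one],
    fun f _ _ _ hg hh => ihara_assoc f hg hh,
    fun f _ => ⟨ihara_one_left f, ihara_one_right f⟩,
    fun f hf => ⟨iharaInv f, iharaInv_nil f, iharaInv_ihara_cancel hf, ihara_iharaInv_cancel hf⟩⟩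
end
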